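/- arXiv:1203.0994 — 6 statements merged into one kernel-verified Lean document; each statement's English description precedes it below -/
import Mathlib

section
/- Every cap in PG(5,2) has at most 32 points; that is, if S is a finite set of nonzero vectors of V = (Fin 6 → ZMod 2) such that no three pairwise distinct elements of S sum to 0, then the cardinality of S is at most 32. -/
/-! Fix `a ∈ S`. For `b ∈ S`, the point `a + b` is `0` when `b = a` and otherwise the third point
of the line through `a` and `b`; either way it is not in `S`. So `S` and its translate `a + S` are
disjoint subsets of `V`, whence `2 |S| ≤ |V| = 64`. -/

/-- The ambient 6-dimensional vector space over GF(2). -/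
abbrev V : Type := Fin 6 → ZMod 2

/-- A cap in PG(5,2): a finite set of nonzero vectors of `V` no three pairwise
distinct elements of which sum to `0`. -/
def IsCap (S : Set V) : Prop :=
  S.Finite ∧ (∀ v ∈ S, v ≠ 0) ∧
    ∀ a ∈ S, ∀ b ∈ S, ∀ c ∈ S, a ≠ b → a ≠ c → b ≠ c → a + b + c ≠ 0

/-- A cap is complete if it cannot be extended by any nonzero vector. -/
def IsCompleteCap (S : Set V) : Prop :=
  IsCap S ∧ ∀ v : V, v ≠ 0 → v ∉ S → ¬ IsCap (insert v S)

/-- Projective equivalence of caps: some linear automorphism of `V` maps one onto the other. -/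
def ProjEquiv (S T : Set V) : Prop :=
  ∃ A : V ≃ₗ[ZMod 2] V, ⇑A '' S = T

/-- The `i`-th standard basis vector of `V`. -/
def e (i : Fin 6) : V := Pi.single i 1

open Pointwise

section ExponentTwo

variable {G : Type*} [AddGroup G] {S : Set G}

theorem disjoint_vadd_of_add_add_ne_zero (hG : ∀ x : G, x + x = 0) (h0 : ∀ v ∈ S, v ≠ 0)
    (hS : ∀ a ∈ S, ∀ b ∈ S, ∀ c ∈ S, a ≠ b → a ≠ c → b ≠ c → a + b + c ≠ 0)
    {a : G} (ha : a ∈ S) : Disjoint S (a +ᵥ S) := by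
  rw [Set.disjoint_right]
  rintro _ ⟨b, hb, rfl⟩ (hab : a + b ∈ S)
  by_cases hba : b = a
  · subst hba
    exact h0 _ hab (hG b)
  have hab_ne_a : a ≠ a + b := fun h => h0 b hb (left_eq_add.mp h)
  have hab_ne_b : b ≠ a + b := fun h => h0 a ha (right_eq_add.mp h)
  exact hS a ha b hb _ hab (Ne.symm hba) hab_ne_a hab_ne_b (hG _)

theorem two_mul_ncard_le_card_of_add_add_ne_zero [Finite G] (hG : ∀ x : G, x + x = 0)
    (h0 : ∀ v ∈ S, v ≠ 0)
    (hS : ∀ a ∈ S, ∀ b ∈ S, ∀ c ∈ S, a ≠ b → a ≠ c → b ≠ c → a + b + c ≠ 0) :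
    2 * S.ncard ≤ Nat.card G := by
  rcases S.eq_empty_or_nonempty with rfl | ⟨a, ha⟩
  · simp
  calc 2 * S.ncard = (S ∪ (a +ᵥ S)).ncard := by
        rw [Set.ncard_union_eq (disjoint_vadd_of_add_add_ne_zero hG h0 hS ha)
          (Set.toFinite _) (Set.toFinite _), Set.ncard_vadd_set, two_mul]
    _ ≤ Nat.card G := Set.ncard_le_card _

end ExponentTwo

/-- Every cap in PG(5,2) has at most 32 points. -/
theorem cap_card_le_32 (S : Set V) (hS : IsCap S) : S.ncard ≤ 32 := by
  obtain ⟨-, h0, hcap⟩ := hS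
  have hcard : 2 * S.ncard ≤ Nat.card V :=
    two_mul_ncard_le_card_of_add_add_ne_zero CharTwo.add_self_eq_zero h0 hcap
  have hV : Nat.card V = 64 := by simp
  omega
end

section
/- Up to projective equivalence there is exactly one 32-cap in PG(5,2): every cap S with 32 elements is the complement in V \ {0} of a 5-dimensional linear subspace of V; in particular, any two caps of size 32 are projectively equivalent. -/
/-!
A cap `S` is sum-free: `a + b ∉ S` for `a, b ∈ S`, since `a`, `b`, `a + b` would be collinear.
So for `a ∈ S` the translate `a + S` lies in the complement of `S`, and as both have 32 elements,
`a + S = Sᶜ`. A difference of two points `a + s`, `a + t` of `Sᶜ` is then `s - t`, which is not in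
`S` because `t + (s - t) = s` is; hence `Sᶜ` is a subgroup of order 32, a hyperplane. Any two
hyperplanes are exchanged by a linear automorphism, which maps their complements onto each other.
-/

section SumFree

variable {G : Type*} [AddCommGroup G] [Finite G] {S : Set G}

theorem image_add_left_eq_compl_of_sumFree (hS : ∀ a ∈ S, ∀ b ∈ S, a + b ∉ S)
    (hcard : 2 * S.ncard = Nat.card G) {a : G} (ha : a ∈ S) : (a + ·) '' S = Sᶜ := by
  refine Set.eq_of_subset_of_ncard_le ?_ ?_ (Set.toFinite _)
  · rintro _ ⟨b, hb, rfl⟩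
    exact hS a ha b hb
  · have := Set.ncard_add_ncard_compl S
    rw [Set.ncard_image_of_injective _ (add_right_injective a)]
    omega

theorem exists_addSubgroup_coe_eq_compl_of_sumFree (hS : ∀ a ∈ S, ∀ b ∈ S, a + b ∉ S)
    (hcard : 2 * S.ncard = Nat.card G) : ∃ H : AddSubgroup G, (H : Set G) = Sᶜ := by
  obtain ⟨a, ha⟩ : S.Nonempty := by
    rw [← Set.ncard_pos]
    have := Nat.card_pos (α := G)
    omega
  have hzero : (0 : G) ∈ Sᶜ := fun h0 => hS 0 h0 0 h0 (by rwa [add_zero])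
  have htrans := image_add_left_eq_compl_of_sumFree hS hcard ha
  refine ⟨AddSubgroup.ofSub Sᶜ ⟨0, hzero⟩ ?_, rfl⟩
  rintro x hx y hy
  rw [← htrans] at hx hy
  obtain ⟨s, hs, rfl⟩ := hx
  obtain ⟨t, ht, rfl⟩ := hy
  rw [show a + s + -(a + t) = s + -t by abel]
  exact fun h => hS t ht _ h (by convert hs using 1; abel)

end SumFree

theorem exists_linearEquiv_map_eq_of_finrank_eq {K W : Type*} [Field K] [AddCommGroup W]
    [Module K W] [FiniteDimensional K W] {p q : Submodule K W}
    (h : Module.finrank K p = Module.finrank K q) :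
    ∃ A : W ≃ₗ[K] W, p.map (A : W →ₗ[K] W) = q := by
  obtain ⟨p', hp⟩ := p.exists_isCompl
  obtain ⟨q', hq⟩ := q.exists_isCompl
  have h' : Module.finrank K p' = Module.finrank K q' := by
    have := Submodule.finrank_add_eq_of_isCompl hp
    have := Submodule.finrank_add_eq_of_isCompl hq
    omega
  let A : W ≃ₗ[K] W :=
    ((Submodule.prodEquivOfIsCompl p p' hp).symm.trans
      ((LinearEquiv.ofFinrankEq _ _ h).prodCongr (LinearEquiv.ofFinrankEq _ _ h'))).trans
      (Submodule.prodEquivOfIsCompl q q' hq)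
  refine ⟨A, Submodule.eq_of_le_of_finrank_eq ?_ (by rw [LinearEquiv.finrank_map_eq, h])⟩
  rintro _ ⟨x, hx, rfl⟩
  simp [A, Submodule.prodEquivOfIsCompl_symm_apply_left p p' hp ⟨x, hx⟩]

theorem IsCap.add_notMem {S : Set V} (hS : IsCap S) {a b : V} (ha : a ∈ S) (hb : b ∈ S) :
    a + b ∉ S := by
  obtain ⟨-, hnz, hcap⟩ := hS
  intro hab
  by_cases h : a = b
  · subst h
    exact hnz _ hab (CharTwo.add_self_eq_zero a)
  refine hcap a ha b hb (a + b) hab h ?_ ?_ ?_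
  · exact fun he => hnz b hb (by simpa using he.symm)
  · exact fun he => hnz a ha (by simpa using he.symm)
  · exact CharTwo.add_self_eq_zero _

theorem IsCap.exists_finrank_eq_five_eq_compl {S : Set V} (hS : IsCap S) (h32 : S.ncard = 32) :
    ∃ H : Submodule (ZMod 2) V, Module.finrank (ZMod 2) H = 5 ∧ S = {v : V | v ∉ H} := by
  have hcardV : Nat.card V = 64 := by simp
  obtain ⟨H, hH⟩ := exists_addSubgroup_coe_eq_compl_of_sumFree
    (fun a ha b hb => hS.add_notMem ha hb) (by rw [h32, hcardV])
  refine ⟨AddSubgroup.toZModSubmodule 2 H, ?_, ?_⟩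
  · have hcardH : Nat.card (AddSubgroup.toZModSubmodule 2 H) = 2 ^ 5 := by
      rw [← SetLike.coe_sort_coe, AddSubgroup.coe_toZModSubmodule, hH, Nat.card_coe_set_eq]
      have := Set.ncard_add_ncard_compl S
      omega
    rw [Module.natCard_eq_pow_finrank (K := ZMod 2), Nat.card_zmod] at hcardH
    exact Nat.pow_right_injective le_rfl hcardH
  · ext v
    simp [← SetLike.mem_coe, hH]

/-- Every 32-cap in PG(5,2) is the complement of a hyperplane, and any two 32-caps
are projectively equivalent. -/
theorem cap_card_32_unique :
    (∀ S : Set V, IsCap S → S.ncard = 32 → ∃ H : Submodule (ZMod 2) V,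
      Module.finrank (ZMod 2) H = 5 ∧ S = {v : V | v ∉ H}) ∧
    (∀ S T : Set V, IsCap S → S.ncard = 32 → IsCap T → T.ncard = 32 → ProjEquiv S T) := by
  refine ⟨fun S hS h32 => hS.exists_finrank_eq_five_eq_compl h32, ?_⟩
  intro S T hS hS32 hT hT32
  obtain ⟨H₁, h₁, rfl⟩ := hS.exists_finrank_eq_five_eq_compl hS32
  obtain ⟨H₂, h₂, rfl⟩ := hT.exists_finrank_eq_five_eq_compl hT32
  obtain ⟨A, hA⟩ := exists_linearEquiv_map_eq_of_finrank_eq (h₁.trans h₂.symm)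
  refine ⟨A, ?_⟩
  ext v
  simp [← hA, Submodule.mem_map_equiv, LinearEquiv.image_eq_preimage_symm]
end

section
/- There is no complete cap in PG(5,2) whose size k satisfies 21 ≤ k ≤ 31: every cap of cardinality between 21 and 31 can be extended by some nonzero vector to a larger cap. -/
lemma zmod2_cases (a : ZMod 2) : a = 0 ∨ a = 1 := by revert a; decide

lemma addV_self (x : V) : x + x = 0 := by
  funext i
  show x i + x i = 0
  rcases zmod2_cases (x i) with h | h <;> rw [h] <;> decide

lemma eq_of_addV (a b : V) (h : a + b = 0) : a = b := by
  have := congrArg (a + ·) h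
  simpa [← add_assoc, addV_self] using this.symm

lemma eq_iff_addV (x y : V) : x = y ↔ x + y = 0 := by
  constructor
  · rintro rfl; exact addV_self x
  · exact fun h => eq_of_addV x y h

lemma pair_addV (x y u v : V) : (x + u) + (y + v) = (x + y) + (u + v) := by abel

lemma addV_transfer (x y u v : V) (h : x + u = y + v) : x + y = u + v := by
  rw [eq_iff_addV] at h ⊢
  rw [← h]; abel

def dp (w x : V) : ZMod 2 := ∑ i, w i * x i

lemma dp_add_right (w x y : V) : dp w (x + y) = dp w x + dp w y := by
  simp [dp, mul_add, Finset.sum_add_distrib]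

lemma dp_add_left (w w' x : V) : dp (w + w') x = dp w x + dp w' x := by
  simp [dp, add_mul, Finset.sum_add_distrib]

lemma dp_zero_right (w : V) : dp w 0 = 0 := by simp [dp]
lemma dp_zero_left (x : V) : dp 0 x = 0 := by simp [dp]

lemma dp_e_right (w : V) (i : Fin 6) : dp w (e i) = w i := by
  simp [dp, e, Pi.single_apply, mul_ite]

lemma dp_e_left (x : V) (i : Fin 6) : dp (e i) x = x i := by
  simp [dp, e, Pi.single_apply, ite_mul]

noncomputable def chi (w x : V) : ℤ := if dp w x = 0 then 1 else -1

lemma chi_add_right (w x y : V) : chi w (x + y) = chi w x * chi w y := by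
  unfold chi
  rw [dp_add_right]
  rcases zmod2_cases (dp w x) with h1 | h1 <;> rcases zmod2_cases (dp w y) with h2 | h2 <;>
    simp [h1, h2] <;> decide

lemma chi_add_left (w w' x : V) : chi (w + w') x = chi w x * chi w' x := by
  unfold chi
  rw [dp_add_left]
  rcases zmod2_cases (dp w x) with h1 | h1 <;> rcases zmod2_cases (dp w' x) with h2 | h2 <;>
    simp [h1, h2] <;> decide

lemma card_V : Fintype.card V = 64 := by simp [Fintype.card_fun]

lemma sum_chi (v : V) : ∑ w : V, chi w v = if v = 0 then 64 else 0 := by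
  by_cases hv : v = 0
  · subst hv
    simp [chi, dp_zero_right, card_V]
  · simp only [hv, if_false]
    obtain ⟨i, hi⟩ : ∃ i, v i ≠ 0 := by
      by_contra h
      push_neg at h
      exact hv (funext fun i => h i)
    have hu : dp (e i) v ≠ 0 := by rw [dp_e_left]; exact hi
    have hchi : chi (e i) v = -1 := by simp [chi, hu]
    have key : ∀ w : V, chi (w + e i) v = - chi w v := by
      intro w
      rw [chi_add_left, hchi]; ring
    have hb : Function.Bijective (fun w : V => w + e i) :=
      (Equiv.addRight (e i)).bijective
    have h2 : ∑ w : V, chi (w + e i) v = ∑ w : V, chi w v :=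
      Fintype.sum_bijective _ hb _ _ (fun w => rfl)
    have h3 : ∑ w : V, chi (w + e i) v = - ∑ w : V, chi w v := by
      simp [key]
    omega

lemma sum_expand2 (S' : Finset V) :
    ∑ w : V, (∑ x ∈ S', chi w x) ^ 2
      = ∑ a ∈ S', ∑ b ∈ S', (if a + b = 0 then (64 : ℤ) else 0) := by
  have expand : ∀ w : V, (∑ x ∈ S', chi w x) ^ 2 = ∑ a ∈ S', ∑ b ∈ S', chi w (a + b) := by
    intro w
    rw [sq, Finset.sum_mul_sum]
    exact Finset.sum_congr rfl fun a _ =>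
      Finset.sum_congr rfl fun b _ => (chi_add_right w a b).symm
  calc ∑ w : V, (∑ x ∈ S', chi w x) ^ 2
      = ∑ w : V, ∑ a ∈ S', ∑ b ∈ S', chi w (a + b) := by
        exact Finset.sum_congr rfl fun w _ => expand w
    _ = ∑ a ∈ S', ∑ w : V, ∑ b ∈ S', chi w (a + b) := Finset.sum_comm
    _ = ∑ a ∈ S', ∑ b ∈ S', ∑ w : V, chi w (a + b) := by
        exact Finset.sum_congr rfl fun a _ => Finset.sum_comm
    _ = ∑ a ∈ S', ∑ b ∈ S', (if a + b = 0 then (64 : ℤ) else 0) := by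
        exact Finset.sum_congr rfl fun a _ =>
          Finset.sum_congr rfl fun b _ => sum_chi (a + b)

lemma sum_sq (S' : Finset V) :
    ∑ w : V, (∑ x ∈ S', chi w x) ^ 2 = 64 * S'.card := by
  rw [sum_expand2]
  have : ∀ a ∈ S', ∑ b ∈ S', (if a + b = 0 then (64 : ℤ) else 0) = 64 := by
    intro a ha
    rw [Finset.sum_eq_single a]
    · simp [addV_self]
    · intro b hb hba
      have : a + b ≠ 0 := fun h => hba (eq_of_addV a b h).symm
      simp [this]
    · intro h; exact absurd ha h
  rw [Finset.sum_congr rfl this]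
  simp [mul_comm]

lemma sum_cube (S' : Finset V)
    (h3 : ∀ a ∈ S', ∀ b ∈ S', ∀ c ∈ S', a + b + c ≠ 0) :
    ∑ w : V, (∑ x ∈ S', chi w x) ^ 3 = 0 := by
  have expand : ∀ w : V, (∑ x ∈ S', chi w x) ^ 3
      = ∑ a ∈ S', ∑ b ∈ S', ∑ c ∈ S', chi w (a + b + c) := by
    intro w
    rw [pow_succ, sq, Finset.sum_mul_sum, Finset.sum_mul]
    refine Finset.sum_congr rfl fun a _ => ?_
    rw [Finset.sum_mul]
    refine Finset.sum_congr rfl fun b _ => ?_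
    rw [Finset.mul_sum]
    refine Finset.sum_congr rfl fun c _ => ?_
    rw [chi_add_right w (a + b) c, chi_add_right w a b]
  calc ∑ w : V, (∑ x ∈ S', chi w x) ^ 3
      = ∑ w : V, ∑ a ∈ S', ∑ b ∈ S', ∑ c ∈ S', chi w (a + b + c) :=
        Finset.sum_congr rfl fun w _ => expand w
    _ = ∑ a ∈ S', ∑ w : V, ∑ b ∈ S', ∑ c ∈ S', chi w (a + b + c) := Finset.sum_comm
    _ = ∑ a ∈ S', ∑ b ∈ S', ∑ w : V, ∑ c ∈ S', chi w (a + b + c) :=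
        Finset.sum_congr rfl fun a _ => Finset.sum_comm
    _ = ∑ a ∈ S', ∑ b ∈ S', ∑ c ∈ S', ∑ w : V, chi w (a + b + c) :=
        Finset.sum_congr rfl fun a _ => Finset.sum_congr rfl fun b _ => Finset.sum_comm
    _ = 0 := by
        refine Finset.sum_eq_zero fun a ha => Finset.sum_eq_zero fun b hb =>
          Finset.sum_eq_zero fun c hc => ?_
        rw [sum_chi]
        simp [h3 a ha b hb c hc]

lemma card_filter_dp (w : V) (hw : w ≠ 0) :
    (Finset.univ.filter fun x : V => dp w x = 0).card = 32 ∧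
    (Finset.univ.filter fun x : V => ¬ dp w x = 0).card = 32 := by
  obtain ⟨i, hi⟩ : ∃ i, w i ≠ 0 := by
    by_contra h
    push_neg at h
    exact hw (funext fun i => h i)
  have hu : dp w (e i) = 1 := by
    rw [dp_e_right]
    rcases zmod2_cases (w i) with h | h
    · exact absurd h hi
    · exact h
  set u := e i
  set Kf := Finset.univ.filter fun x : V => dp w x = 0 with hKf
  set Mf := Finset.univ.filter fun x : V => ¬ dp w x = 0 with hMf
  have hsum : Kf.card + Mf.card = 64 := by
    rw [hKf, hMf, Finset.card_filter_add_card_filter_not, Finset.card_univ, card_V]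
  have himg : Kf.image (fun x => x + u) = Mf := by
    ext y
    simp only [hKf, hMf, Finset.mem_image, Finset.mem_filter, Finset.mem_univ, true_and]
    constructor
    · rintro ⟨x, hx, rfl⟩
      rw [dp_add_right, hx, hu]
      decide
    · intro hy
      refine ⟨y + u, ?_, by rw [add_assoc, addV_self, add_zero]⟩
      rw [dp_add_right, hu]
      rcases zmod2_cases (dp w y) with h | h
      · exact absurd h hy
      · rw [h]; decide
  have hinj : (Kf.image (fun x => x + u)).card = Kf.card :=
    Finset.card_image_of_injective Kf (add_left_injective u)
  rw [himg] at hinj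
  omega

/-- There is no complete cap in PG(5,2) of size k with 21 ≤ k ≤ 31. -/
theorem no_complete_cap_21_to_31 (S : Set V) (hS : IsCap S)
    (h1 : 21 ≤ S.ncard) (h2 : S.ncard ≤ 31) :
    ∃ v : V, v ≠ 0 ∧ v ∉ S ∧ IsCap (insert v S) := by
  classical
  by_contra hcon
  push_neg at hcon
  obtain ⟨hfin, hnzS, hcapS⟩ := hS
  set S' : Finset V := hfin.toFinset with hS'def
  have hmem : ∀ x : V, x ∈ S' ↔ x ∈ S := fun x => hfin.mem_toFinset
  have hkcard : S.ncard = S'.card := Set.ncard_eq_toFinset_card S hfin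
  have hnz : ∀ x ∈ S', x ≠ 0 := fun x hx => hnzS x ((hmem x).1 hx)
  -- sum-freeness
  have sf : ∀ a ∈ S', ∀ b ∈ S', a + b ∉ S' := by
    intro a ha b hb hab
    by_cases h : a = b
    · subst h
      rw [addV_self] at hab
      exact hnz 0 hab rfl
    · have hca : a + b ≠ a := by
        intro hh
        have : b = 0 := by
          have := congrArg (a + ·) hh
          simpa [← add_assoc, addV_self] using this
        exact hnz b hb this
      have hcb : a + b ≠ b := by
        intro hh
        have : a = 0 := by
          have := congrArg (· + b) hh
          simpa [add_assoc, addV_self] using this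
        exact hnz a ha this
      exact hcapS a ((hmem a).1 ha) b ((hmem b).1 hb) (a + b) ((hmem _).1 hab)
        h (Ne.symm hca) (Ne.symm hcb) (by rw [add_assoc, ← add_assoc, addV_self])
        |>.elim
  have h3 : ∀ a ∈ S', ∀ b ∈ S', ∀ c ∈ S', a + b + c ≠ 0 := by
    intro a ha b hb c hc habc
    by_cases hab : a = b
    · subst hab
      rw [addV_self, zero_add] at habc
      exact hnz c hc habc
    · by_cases hac : a = c
      · subst hac
        have : b = 0 := by
          have : b + (a + a) = 0 := by
            rw [← habc]; ring
          rwa [addV_self, add_zero] at this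
        exact hnz b hb this
      · by_cases hbc : b = c
        · subst hbc
          have : a = 0 := by
            have : a + (b + b) = 0 := by rw [← habc]; ring
            rwa [addV_self, add_zero] at this
          exact hnz a ha this
        · exact hcapS a ((hmem a).1 ha) b ((hmem b).1 hb) c ((hmem c).1 hc)
            hab hac hbc habc
  -- completeness
  have cov : ∀ v : V, v ≠ 0 → v ∉ S' → ∃ a ∈ S', ∃ b ∈ S', a ≠ b ∧ a + b = v := by
    intro v hv hvS
    by_contra hno
    push_neg at hno
    have hvS2 : v ∉ S := fun h => hvS ((hmem v).2 h)
    refine hcon v hv hvS2 ⟨hfin.insert v, ?_, ?_⟩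
    · intro x hx
      rcases Set.mem_insert_iff.1 hx with rfl | hx
      · exact hv
      · exact hnzS x hx
    · intro a ha b hb c hc hab hac hbc habc
      have key : ∀ x y : V, x ∈ S → y ∈ S → x ≠ y → v + x + y ≠ 0 := by
        intro x y hx hy hxy hsum
        have hxy' : x + y = v := by
          have h1 : v + (x + y) = 0 := by rw [← hsum]; ring
          have := eq_of_addV v (x + y) h1
          exact this.symm
        exact hno x ((hmem x).2 hx) y ((hmem y).2 hy) hxy hxy'
      rcases Set.mem_insert_iff.1 ha with ha' | ha'
      · rcases Set.mem_insert_iff.1 hb with hb' | hb'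
        · exact hab (ha'.trans hb'.symm)
        · rcases Set.mem_insert_iff.1 hc with hc' | hc'
          · exact hac (ha'.trans hc'.symm)
          · exact key b c hb' hc' hbc (ha' ▸ habc)
      · rcases Set.mem_insert_iff.1 hb with hb' | hb'
        · rcases Set.mem_insert_iff.1 hc with hc' | hc'
          · exact hbc (hb'.trans hc'.symm)
          · refine key a c ha' hc' hac ?_
            rw [← hb', ← habc]; ring
        · rcases Set.mem_insert_iff.1 hc with hc' | hc'
          · refine key a b ha' hb' hab ?_
            rw [← hc', ← habc]; ring
          · exact hcapS a ha' b hb' c hc' hab hac hbc habc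
  -- Fourier setup
  set k := S'.card with hkdef
  have hk1 : 21 ≤ k := by omega
  have hk2 : k ≤ 31 := by omega
  -- Fourier minimization
  set F : V → ℤ := fun w => ∑ x ∈ S', chi w x with hFdef
  have hF0 : F 0 = (k : ℤ) := by
    simp [hFdef, chi, dp_zero_left, hkdef]
  have hsq : ∑ w : V, F w ^ 2 = 64 * (k : ℤ) := by
    rw [hFdef]; exact_mod_cast sum_sq S'
  have hcb : ∑ w : V, F w ^ 3 = 0 := sum_cube S' h3
  have hsplit2 : ∑ w ∈ Finset.univ.erase 0, F w ^ 2 = 64 * (k : ℤ) - (k : ℤ) ^ 2 := by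
    have h := Finset.sum_erase_add Finset.univ (fun w => F w ^ 2) (Finset.mem_univ (0 : V))
    simp only [hsq] at h
    have h0 : F 0 ^ 2 = (k : ℤ) ^ 2 := by rw [hF0]
    simp only [h0] at h
    linarith
  have hsplit3 : ∑ w ∈ Finset.univ.erase 0, F w ^ 3 = - (k : ℤ) ^ 3 := by
    have h := Finset.sum_erase_add Finset.univ (fun w => F w ^ 3) (Finset.mem_univ (0 : V))
    simp only [hcb] at h
    have h0 : F 0 ^ 3 = (k : ℤ) ^ 3 := by rw [hF0]
    simp only [h0] at h
    linarith
  have hne : (Finset.univ.erase (0 : V)).Nonempty := by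
    refine ⟨e 0, Finset.mem_erase.2 ⟨?_, Finset.mem_univ _⟩⟩
    intro h
    have := congrFun h 0
    simp [e] at this
  obtain ⟨w₀, hw₀mem, hmin⟩ := Finset.exists_min_image (Finset.univ.erase 0) F hne
  have hw₀ : w₀ ≠ 0 := (Finset.mem_erase.1 hw₀mem).1
  set m := F w₀ with hmdef
  have hkey : m * (64 * (k : ℤ) - (k : ℤ) ^ 2) ≤ - (k : ℤ) ^ 3 := by
    have hb : ∀ w ∈ Finset.univ.erase (0 : V), m * F w ^ 2 ≤ F w ^ 3 := by
      intro w hw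
      have hmw := hmin w hw
      nlinarith [sq_nonneg (F w)]
    calc m * (64 * (k : ℤ) - (k : ℤ) ^ 2) = ∑ w ∈ Finset.univ.erase 0, m * F w ^ 2 := by
          rw [← Finset.mul_sum, hsplit2]
      _ ≤ ∑ w ∈ Finset.univ.erase 0, F w ^ 3 := Finset.sum_le_sum hb
      _ = - (k : ℤ) ^ 3 := hsplit3
  -- split S' along the hyperplane of w₀
  set A : Finset V := S'.filter (fun x => ¬ dp w₀ x = 0) with hAdef
  set B : Finset V := S'.filter (fun x => dp w₀ x = 0) with hBdef
  have hABk : B.card + A.card = k := by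
    rw [hAdef, hBdef, hkdef]
    exact Finset.card_filter_add_card_filter_not (fun x => dp w₀ x = 0)
  have hmAB : m = (B.card : ℤ) - (A.card : ℤ) := by
    have hm2 : m = ∑ x ∈ B, chi w₀ x + ∑ x ∈ A, chi w₀ x := by
      rw [hmdef]
      exact (Finset.sum_filter_add_sum_filter_not S' (fun x => dp w₀ x = 0) _).symm
    have hB1 : ∑ x ∈ B, chi w₀ x = (B.card : ℤ) := by
      rw [Finset.sum_congr rfl (fun x hx => ?_)]
      · rw [Finset.sum_const, nsmul_eq_mul, mul_one]
      · have := (Finset.mem_filter.1 hx).2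
        simp [chi, this]
    have hA1 : ∑ x ∈ A, chi w₀ x = - (A.card : ℤ) := by
      rw [Finset.sum_congr rfl (fun x hx => ?_), Finset.sum_const, nsmul_eq_mul, mul_neg_one]
      have := (Finset.mem_filter.1 hx).2
      simp [chi, this]
    rw [hB1, hA1] at hm2
    linarith [hm2]
  -- the case where S' avoids the hyperplane entirely
  have hdpM : ∀ x ∈ A, dp w₀ x = 1 := by
    intro x hx
    have := (Finset.mem_filter.1 hx).2
    rcases zmod2_cases (dp w₀ x) with h | h
    · exact absurd h this
    · exact h
  have hdpB : ∀ x ∈ B, dp w₀ x = 0 := fun x hx => (Finset.mem_filter.1 hx).2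
  have hsub : ∀ x ∈ S', x ∈ A ∨ x ∈ B := by
    intro x hx
    by_cases h : dp w₀ x = 0
    · exact Or.inr (Finset.mem_filter.2 ⟨hx, h⟩)
    · exact Or.inl (Finset.mem_filter.2 ⟨hx, h⟩)
  obtain ⟨hK32, hM32⟩ := card_filter_dp w₀ hw₀
  set Mf : Finset V := Finset.univ.filter (fun x : V => ¬ dp w₀ x = 0) with hMfdef
  set Kf : Finset V := Finset.univ.filter (fun x : V => dp w₀ x = 0) with hKfdef
  by_cases hBemp : B = ∅
  · -- S' lies in the affine part; some point of Mf is uncovered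
    have hSA : ∀ x ∈ S', x ∈ A := by
      intro x hx
      rcases hsub x hx with h | h
      · exact h
      · rw [hBemp] at h; exact absurd h (Finset.notMem_empty x)
    have hAM : A ⊆ Mf := by
      intro x hx
      exact Finset.mem_filter.2 ⟨Finset.mem_univ x, (Finset.mem_filter.1 hx).2⟩
    have hnotsub : ¬ Mf ⊆ S' := by
      intro hsub2
      have := Finset.card_le_card hsub2
      rw [hM32] at this
      omega
    obtain ⟨v, hvM, hvS⟩ := Finset.not_subset.1 hnotsub
    have hvdp : ¬ dp w₀ v = 0 := (Finset.mem_filter.1 hvM).2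
    have hv0 : v ≠ 0 := by
      intro h
      rw [h, dp_zero_right] at hvdp
      exact hvdp rfl
    obtain ⟨a, ha, b, hb, hab, habv⟩ := cov v hv0 hvS
    have hda := hdpM a (hSA a ha)
    have hdb := hdpM b (hSA b hb)
    rw [← habv, dp_add_right, hda, hdb] at hvdp
    exact hvdp (by decide)
  · -- B is nonempty
    obtain ⟨b₁, hb₁⟩ := Finset.nonempty_iff_ne_empty.2 hBemp
    -- translation of A by b₁ is disjoint from A inside Mf
    have hAM : A ⊆ Mf := fun x hx =>
      Finset.mem_filter.2 ⟨Finset.mem_univ x, (Finset.mem_filter.1 hx).2⟩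
    have himgM : ∀ b ∈ B, A.image (fun x => x + b) ⊆ Mf \ A := by
      intro b hb y hy
      obtain ⟨x, hx, rfl⟩ := Finset.mem_image.1 hy
      refine Finset.mem_sdiff.2 ⟨Finset.mem_filter.2 ⟨Finset.mem_univ _, ?_⟩, ?_⟩
      · rw [dp_add_right, hdpM x hx, hdpB b hb]
        decide
      · intro hmem2
        exact sf x (Finset.filter_subset _ _ hx) b (Finset.filter_subset _ _ hb)
          ((hmem (x + b)).1 ((Finset.filter_subset _ _) hmem2) |> fun hh => ((hmem _).2 hh)) |>.elim
    -- arithmetic: k = 21, |A| = 16, |B| = 5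
    clear_value k F m
    have himgcard : ∀ b : V, ∀ A' : Finset V, (A'.image (fun x => x + b)).card = A'.card :=
      fun b A' => Finset.card_image_of_injective A' (add_left_injective b)
    have hA16 : A.card ≤ 16 := by
      have hdisj : Disjoint A (A.image (fun x => x + b₁)) := by
        rw [Finset.disjoint_right]
        intro x hx hxa
        exact (Finset.mem_sdiff.1 (himgM b₁ hb₁ hx)).2 hxa
      have hsubM : A ∪ A.image (fun x => x + b₁) ⊆ Mf := by
        intro x hx
        rcases Finset.mem_union.1 hx with h | h
        · exact hAM h
        · exact (Finset.mem_sdiff.1 (himgM b₁ hb₁ h)).1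
      have := Finset.card_le_card hsubM
      rw [Finset.card_union_of_disjoint hdisj, himgcard, hM32] at this
      omega
    obtain ⟨hk21, hm11⟩ : k = 21 ∧ m = -11 := by
      interval_cases k <;>
        · norm_num at hkey
          omega
    have hAcard : A.card = 16 := by omega
    have hBcard : B.card = 5 := by omega
    -- each translate of A by an element of B is exactly Mf \ A
    have hMA : ∀ b ∈ B, A.image (fun x => x + b) = Mf \ A := by
      intro b hb
      refine Finset.eq_of_subset_of_card_le (himgM b hb) ?_
      rw [himgcard, Finset.card_sdiff_of_subset hAM, hM32, hAcard]
    -- the stabilizer of A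
    set H : Finset V := Finset.univ.filter (fun h => ∀ a ∈ A, a + h ∈ A) with hHdef
    have hHmem : ∀ h : V, h ∈ H ↔ ∀ a ∈ A, a + h ∈ A := by
      intro h
      simp [hHdef]
    have hBBH : ∀ b ∈ B, ∀ b' ∈ B, b + b' ∈ H := by
      intro b hb b' hb'
      rw [hHmem]
      intro a ha
      have h1 : a + b ∈ A.image (fun x => x + b) := Finset.mem_image_of_mem _ ha
      rw [hMA b hb, ← hMA b' hb'] at h1
      obtain ⟨a', ha', he⟩ := Finset.mem_image.1 h1
      have heq : a + (b + b') = a' := by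
        have h3 : a' + a = b' + b := addV_transfer _ _ _ _ he
        rw [eq_iff_addV]
        rw [eq_iff_addV] at h3
        rw [← h3]; abel
      rw [heq]; exact ha'
    have hHadd : ∀ h ∈ H, ∀ h' ∈ H, h + h' ∈ H := by
      intro h hh h' hh'
      rw [hHmem] at hh hh' ⊢
      intro a ha
      rw [← add_assoc]
      exact hh' _ (hh a ha)
    have hH0 : (0 : V) ∈ H := by
      rw [hHmem]; intro a ha; rwa [add_zero]
    have hAne : A.Nonempty := by
      rw [← Finset.card_pos, hAcard]; norm_num
    obtain ⟨a₁, ha₁⟩ := hAne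
    have hb₁H : b₁ ∉ H := by
      intro hmemH
      have := (hHmem b₁).1 hmemH a₁ ha₁
      have h2 : a₁ + b₁ ∈ A.image (fun x => x + b₁) := Finset.mem_image_of_mem _ ha₁
      rw [hMA b₁ hb₁] at h2
      exact (Finset.mem_sdiff.1 h2).2 this
    have hHK : H ⊆ Kf := by
      intro h hh
      have hA1 := (hHmem h).1 hh a₁ ha₁
      have hd1 := hdpM a₁ ha₁
      have hd2 := hdpM _ hA1
      rw [dp_add_right, hd1] at hd2
      refine Finset.mem_filter.2 ⟨Finset.mem_univ _, ?_⟩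
      rcases zmod2_cases (dp w₀ h) with h0 | h0
      · exact h0
      · rw [h0] at hd2; exact absurd hd2 (by decide)
    have hH5 : 5 ≤ H.card := by
      have hsubH : B.image (fun x => x + b₁) ⊆ H := by
        intro x hx
        obtain ⟨b, hb, rfl⟩ := Finset.mem_image.1 hx
        exact hBBH b hb b₁ hb₁
      have := Finset.card_le_card hsubH
      rw [himgcard, hBcard] at this
      exact this
    have hIAsub : ∀ a ∈ A, H.image (fun h => a + h) ⊆ A := by
      intro a ha x hx
      obtain ⟨h, hh, rfl⟩ := Finset.mem_image.1 hx
      exact (hHmem h).1 hh a ha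
    have himgcard' : ∀ a : V, (H.image (fun h => a + h)).card = H.card :=
      fun a => Finset.card_image_of_injective H (add_right_injective a)
    have hH16 : H.card ≤ 16 := by
      have := Finset.card_le_card (hIAsub a₁ ha₁)
      rwa [himgcard', hAcard] at this
    -- Lagrange: |H| divides 64
    have hdvd : H.card ∣ 64 := by
      let Hgrp : AddSubgroup V :=
        { carrier := {h : V | ∀ a ∈ A, a + h ∈ A}
          zero_mem' := by intro a ha; rwa [add_zero]
          add_mem' := by
            intro x y hx hy a ha
            rw [← add_assoc]
            exact hy _ (hx a ha)
          neg_mem' := by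
            intro x hx
            have hxx : -x = x := neg_eq_of_add_eq_zero_left (addV_self x)
            rw [hxx]
            exact hx }
      have hseteq : (Hgrp : Set V) = (H : Set V) := by
        ext h
        simp [Hgrp, hHdef]
      have hcardeq : Nat.card Hgrp = H.card := by
        have h1 : Nat.card Hgrp = (Hgrp : Set V).ncard := (Nat.card_coe_set_eq _)
        rw [h1, hseteq, Set.ncard_coe_finset]
      have h64 : Nat.card V = 64 := by rw [Nat.card_eq_fintype_card, card_V]
      have := AddSubgroup.card_addSubgroup_dvd_card Hgrp
      rwa [hcardeq, h64] at this
    -- obtain a two-coset covering of A + A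
    obtain ⟨c, hAA, hbadcard⟩ :
        ∃ c : V, (∀ a ∈ A, ∀ a' ∈ A, a + a' ∈ H ∪ H.image (fun h => c + h)) ∧
          (H ∪ H.image (fun h => c + h) ∪ B).card ≤ 21 := by
      by_cases hone : ∀ a ∈ A, a₁ + a ∈ H
      · refine ⟨0, ?_, ?_⟩
        · intro a ha a' ha'
          apply Finset.mem_union_left
          have h1 := hone a ha
          have h2 := hone a' ha'
          have h3 := hHadd _ h1 _ h2
          have heq : (a₁ + a) + (a₁ + a') = a + a' := by
            rw [pair_addV, addV_self, zero_add]
          rwa [heq] at h3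
        · have himid : H.image (fun h => (0 : V) + h) = H := by
            simp
          rw [himid, Finset.union_self]
          calc (H ∪ B).card ≤ H.card + B.card := Finset.card_union_le _ _
            _ ≤ 21 := by rw [hBcard]; omega
      · push_neg at hone
        obtain ⟨a₂, ha₂, ha₂H⟩ := hone
        -- A is exactly the union of the two cosets a₁ + H and a₂ + H
        have hdisjI : Disjoint (H.image (fun h => a₁ + h)) (H.image (fun h => a₂ + h)) := by
          rw [Finset.disjoint_left]
          intro x hx1 hx2
          obtain ⟨h, hh, rfl⟩ := Finset.mem_image.1 hx1
          obtain ⟨h', hh', he⟩ := Finset.mem_image.1 hx2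
          apply ha₂H
          have h2 : a₂ + a₁ = h' + h := addV_transfer _ _ _ _ he
          have h3 : a₁ + a₂ = h' + h := by
            rw [eq_iff_addV] at h2 ⊢
            rw [← h2]; abel
          rw [h3]
          exact hHadd _ hh' _ hh
        have hH8 : H.card = 8 := by
          have hsub2 : H.image (fun h => a₁ + h) ∪ H.image (fun h => a₂ + h) ⊆ A := by
            intro x hx
            rcases Finset.mem_union.1 hx with h | h
            · exact hIAsub a₁ ha₁ h
            · exact hIAsub a₂ ha₂ h
          have hc2 := Finset.card_le_card hsub2
          rw [Finset.card_union_of_disjoint hdisjI, himgcard', himgcard', hAcard] at hc2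
          obtain ⟨n, hn⟩ : ∃ n, H.card = n := ⟨_, rfl⟩
          rw [hn] at hH5 hc2 hdvd ⊢
          have hn8 : n ≤ 8 := by omega
          interval_cases n <;> revert hdvd <;> decide
        have hAeq : A = H.image (fun h => a₁ + h) ∪ H.image (fun h => a₂ + h) := by
          refine (Finset.eq_of_subset_of_card_le ?_ ?_).symm
          · intro x hx
            rcases Finset.mem_union.1 hx with h | h
            · exact hIAsub a₁ ha₁ h
            · exact hIAsub a₂ ha₂ h
          · rw [Finset.card_union_of_disjoint hdisjI, himgcard', himgcard', hAcard, hH8]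
        refine ⟨a₁ + a₂, ?_, ?_⟩
        · intro a ha a' ha'
          rw [hAeq] at ha ha'
          have same : ∀ x : V, ∀ h ∈ H, ∀ h' ∈ H,
              (x + h) + (x + h') ∈ H ∪ H.image (fun h => (a₁ + a₂) + h) := by
            intro x h hh h' hh'
            apply Finset.mem_union_left
            have heq : (x + h) + (x + h') = h + h' := by
              rw [pair_addV, addV_self, zero_add]
            rw [heq]
            exact hHadd _ hh _ hh'
          have cross : ∀ h ∈ H, ∀ h' ∈ H,
              (a₁ + h) + (a₂ + h') ∈ H ∪ H.image (fun h => (a₁ + a₂) + h) := by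
            intro h hh h' hh'
            apply Finset.mem_union_right
            rw [pair_addV]
            exact Finset.mem_image_of_mem _ (hHadd _ hh _ hh')
          have cross' : ∀ h ∈ H, ∀ h' ∈ H,
              (a₂ + h) + (a₁ + h') ∈ H ∪ H.image (fun h => (a₁ + a₂) + h) := by
            intro h hh h' hh'
            have heq : (a₂ + h) + (a₁ + h') = (a₁ + h') + (a₂ + h) := by abel
            rw [heq]
            exact cross h' hh' h hh
          rcases Finset.mem_union.1 ha with hu | hu
          · rcases Finset.mem_union.1 ha' with hu' | hu'
            · obtain ⟨h, hh, rfl⟩ := Finset.mem_image.1 hu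
              obtain ⟨h', hh', rfl⟩ := Finset.mem_image.1 hu'
              exact same a₁ h hh h' hh'
            · obtain ⟨h, hh, rfl⟩ := Finset.mem_image.1 hu
              obtain ⟨h', hh', rfl⟩ := Finset.mem_image.1 hu'
              exact cross h hh h' hh'
          · rcases Finset.mem_union.1 ha' with hu' | hu'
            · obtain ⟨h, hh, rfl⟩ := Finset.mem_image.1 hu
              obtain ⟨h', hh', rfl⟩ := Finset.mem_image.1 hu'
              exact cross' h hh h' hh'
            · obtain ⟨h, hh, rfl⟩ := Finset.mem_image.1 hu
              obtain ⟨h', hh', rfl⟩ := Finset.mem_image.1 hu'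
              exact same a₂ h hh h' hh'
        · calc (H ∪ H.image (fun h => (a₁ + a₂) + h) ∪ B).card
              ≤ (H ∪ H.image (fun h => (a₁ + a₂) + h)).card + B.card :=
                Finset.card_union_le _ _
            _ ≤ H.card + (H.image (fun h => (a₁ + a₂) + h)).card + B.card := by
                have := Finset.card_union_le H (H.image (fun h => (a₁ + a₂) + h))
                omega
            _ ≤ 21 := by rw [himgcard', hH8, hBcard]
    -- the uncovered point
    have hbadsub : ¬ Kf ⊆ H ∪ H.image (fun h => c + h) ∪ B := by
      intro hsub2
      have := Finset.card_le_card hsub2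
      rw [hK32] at this
      omega
    obtain ⟨v, hvK, hvbad⟩ := Finset.not_subset.1 hbadsub
    have hv0 : v ≠ 0 := by
      rintro rfl
      exact hvbad (Finset.mem_union_left _ (Finset.mem_union_left _ hH0))
    have hvdp : dp w₀ v = 0 := (Finset.mem_filter.1 hvK).2
    have hvS : v ∉ S' := by
      intro hvS'
      exact hvbad (Finset.mem_union_right _ (Finset.mem_filter.2 ⟨hvS', hvdp⟩))
    obtain ⟨a, ha, b, hb, hab, habv⟩ := cov v hv0 hvS
    rcases hsub a ha with haA | haB
    · rcases hsub b hb with hbA | hbB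
      · exact hvbad (Finset.mem_union_left _ (habv ▸ hAA a haA b hbA))
      · rw [← habv, dp_add_right, hdpM a haA, hdpB b hbB] at hvdp
        exact absurd hvdp (by decide)
    · rcases hsub b hb with hbA | hbB
      · rw [← habv, dp_add_right, hdpB a haB, hdpM b hbA] at hvdp
        exact absurd hvdp (by decide)
      · exact hvbad (Finset.mem_union_left _
          (Finset.mem_union_left _ (habv ▸ hBBH a haB b hbB)))
end

section
/- Up to projective equivalence there are exactly 4 caps of size 7 in PG(5,2) that span V: the four caps each consisting of the six standard basis vectors e1, …, e6 of V = (Fin 6 → ZMod 2) together with, respectively, the vector (1,1,1,1,1,1), the vector (1,0,0,0,1,1), the vector (1,1,0,1,1,0), and the vector (1,1,1,0,1,1), are pairwise projectively inequivalent caps, and every 7-cap whose elements span V is projectively equivalent to one of these four. -/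
/-- The 7-cap consisting of the six standard basis vectors together with `w`. -/
def cap7 (w : V) : Set V := {e 0, e 1, e 2, e 3, e 4, e 5, w}

/-!
After a linear change of coordinates, six of the seven points of a spanning 7-cap are the
standard basis, so the cap is `cap7 w` for a vector `w` outside the basis; the cap condition
forbids `w` of Hamming weight `≤ 2`, and a permutation of coordinates moves `w` to the listed
representative of the same weight `3, 4, 5` or `6`. Conversely the weight is a projective
invariant: linear automorphisms preserve the sizes of zero-sum subsets, and the only nonempty
zero-sum subset of `cap7 w` is `w` together with the basis vectors of its support.
-/

open Module

section ZeroSums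

variable {M N : Type*} [AddCommMonoid M] [AddCommMonoid N]

def zeroSumCards (S : Set M) : Set ℕ :=
  {n | ∃ F : Finset M, ↑F ⊆ S ∧ F.card = n ∧ ∑ v ∈ F, v = 0}

theorem zeroSumCards_subset_image {F : Type*} [FunLike F M N] [AddMonoidHomClass F M N] {f : F}
    (hf : Function.Injective f) (S : Set M) : zeroSumCards S ⊆ zeroSumCards (f '' S) := by
  classical
  rintro n ⟨F, hFS, rfl, hF⟩
  refine ⟨F.image f, by simpa using Set.image_mono hFS, F.card_image_of_injective hf, ?_⟩
  rw [Finset.sum_image fun x _ y _ h => hf h, ← map_sum, hF, map_zero]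

theorem zeroSumCards_coe_finset [DecidableEq M] (F : Finset M) :
    zeroSumCards (F : Set M) =
      ↑((F.powerset.filter fun G => ∑ v ∈ G, v = 0).image Finset.card) := by
  ext n
  simp only [zeroSumCards, Set.mem_ofPred_eq, Finset.coe_subset, Finset.coe_image,
    Finset.coe_filter, Finset.mem_powerset, Set.mem_image]
  exact exists_congr fun G => by tauto

end ZeroSums

namespace ProjEquiv

theorem symm {S T : Set V} (h : ProjEquiv S T) : ProjEquiv T S := by
  obtain ⟨A, rfl⟩ := h
  exact ⟨A.symm, by simp [Set.image_image]⟩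

theorem trans {S T U : Set V} (h : ProjEquiv S T) (h' : ProjEquiv T U) : ProjEquiv S U := by
  obtain ⟨A, rfl⟩ := h
  obtain ⟨B, rfl⟩ := h'
  exact ⟨A.trans B, by rw [← Set.image_comp]; rfl⟩

theorem zeroSumCards_eq {S T : Set V} (h : ProjEquiv S T) : zeroSumCards S = zeroSumCards T := by
  obtain ⟨A, rfl⟩ := h
  refine subset_antisymm (zeroSumCards_subset_image A.injective S) ?_
  simpa [Set.image_image] using zeroSumCards_subset_image A.symm.injective (A '' S)

end ProjEquiv

theorem IsCap.image {S : Set V} (h : IsCap S) (A : V ≃ₗ[ZMod 2] V) : IsCap (A '' S) := by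
  obtain ⟨hfin, hnz, htri⟩ := h
  refine ⟨hfin.image _, ?_, ?_⟩
  · rintro _ ⟨x, hx, rfl⟩
    simpa using hnz x hx
  · rintro _ ⟨a, ha, rfl⟩ _ ⟨b, hb, rfl⟩ _ ⟨c, hc, rfl⟩ hab hac hbc
    simpa [← map_add] using htri a ha b hb c hc (ne_of_apply_ne A hab) (ne_of_apply_ne A hac)
      (ne_of_apply_ne A hbc)

theorem isCap_coe_iff (F : Finset V) :
    IsCap ↑F ↔ (∀ v ∈ F, v ≠ 0) ∧
      ∀ a ∈ F, ∀ b ∈ F, ∀ c ∈ F, a ≠ b → a ≠ c → b ≠ c → a + b + c ≠ 0 := by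
  simp [IsCap]

theorem e_injective : Function.Injective e :=
  fun i j h => by simpa [e, Pi.single_apply, eq_comm] using congrFun h j

theorem cap7_eq_coe (w : V) : cap7 w = ↑({e 0, e 1, e 2, e 3, e 4, e 5, w} : Finset V) := by
  simp [cap7]

theorem cap7_eq_insert_range (w : V) : cap7 w = insert w (Set.range e) := by
  ext v
  simp only [cap7, Set.mem_insert_iff, Set.mem_singleton_iff, eq_comm, Set.mem_range,
    Fin.exists_fin_succ, Fin.succ_zero_eq_one, Fin.succ_one_eq_two, Fin.reduceSucc,
    IsEmpty.exists_iff, or_false]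
  tauto

theorem e_mem_cap7 (i : Fin 6) (w : V) : e i ∈ cap7 w := by
  rw [cap7_eq_insert_range]
  exact Set.mem_insert_of_mem _ ⟨i, rfl⟩

theorem self_mem_cap7 (w : V) : w ∈ cap7 w := by
  rw [cap7_eq_insert_range]
  exact Set.mem_insert _ _

theorem span_cap7_eq_top (w : V) : Submodule.span (ZMod 2) (cap7 w) = ⊤ := by
  refine top_unique ((Pi.basisFun (ZMod 2) (Fin 6)).span_eq.symm.trans_le (Submodule.span_mono ?_))
  rintro _ ⟨i, rfl⟩
  rw [Pi.basisFun_apply]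
  exact e_mem_cap7 i w

theorem exists_linearEquiv_image_eq_cap7 {S : Set V} (hS : S.Finite) (hcard : S.ncard = 7)
    (hspan : Submodule.span (ZMod 2) S = ⊤) :
    ∃ A : V ≃ₗ[ZMod 2] V, ∃ w ∉ Set.range e, A '' S = cap7 w := by
  obtain ⟨t, hts, hspan_t, hli⟩ := exists_linearIndependent (ZMod 2) S
  let B := Basis.mk hli (by rw [Subtype.range_coe, hspan_t, hspan])
  have hcard_t : Nat.card t = 6 := by rw [← finrank_eq_nat_card_basis B, finrank_fin_fun]
  let A := B.equiv (Pi.basisFun (ZMod 2) (Fin 6)) (Finite.equivFinOfCardEq hcard_t)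
  have hAt : A '' t = Set.range e := by
    have hA : ⇑A ∘ Subtype.val = e ∘ Finite.equivFinOfCardEq hcard_t := funext fun x => by
      rw [Function.comp_apply, ← Basis.mk_apply hli _ x]
      exact (B.equiv_apply x _ _).trans (Pi.basisFun_apply _ _ _)
    rw [← Subtype.range_coe (s := t), ← Set.range_comp, hA, EquivLike.range_comp]
  obtain ⟨u, hu⟩ : ∃ u, S \ t = {u} := by
    rw [← Set.ncard_eq_one, Set.ncard_sdiff hts (hS.subset hts), hcard, ← Nat.card_coe_set_eq,
      hcard_t]
  have hut : u ∈ S \ t := hu ▸ rfl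
  refine ⟨A, A u, ?_, ?_⟩
  · rw [← hAt, A.injective.mem_set_image]
    exact hut.2
  · rw [cap7_eq_insert_range, ← hAt, ← Set.image_insert_eq, ← Set.singleton_union, ← hu,
      Set.sdiff_union_of_subset hts]

theorem three_le_hammingNorm_of_ne (w : V) (h0 : w ≠ 0) (h1 : ∀ i, w ≠ e i)
    (h2 : ∀ i j, i ≠ j → w ≠ e i + e j) : 3 ≤ hammingNorm w := by
  revert w
  decide

theorem IsCap.three_le_hammingNorm {w : V} (h : IsCap (cap7 w)) (hw : w ∉ Set.range e) :
    3 ≤ hammingNorm w := by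
  refine three_le_hammingNorm_of_ne w (h.2.1 w (self_mem_cap7 w)) (fun i hi => hw ⟨i, hi.symm⟩)
    fun i j hij hwij => h.2.2 _ (e_mem_cap7 i w) _ (e_mem_cap7 j w) w (self_mem_cap7 w)
      (e_injective.ne hij) (fun hi => hw ⟨i, hi⟩) (fun hj => hw ⟨j, hj⟩) ?_
  rw [hwij]
  exact CharTwo.add_self_eq_zero _

theorem exists_perm_comp_eq_of_hammingNorm_eq {ι : Type*} [Fintype ι] [DecidableEq ι]
    {v w : ι → ZMod 2} (h : hammingNorm v = hammingNorm w) :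
    ∃ σ : Equiv.Perm ι, w = v ∘ σ := by
  have := @Set.powersetCard.isPretransitive ι (hammingNorm v) _
  obtain ⟨σ, hσ⟩ := MulAction.exists_smul_eq (Equiv.Perm ι)
    (⟨({i | v i ≠ 0} : Finset ι), rfl⟩ : Set.powersetCard ι (hammingNorm v))
    ⟨({i | w i ≠ 0} : Finset ι), h.symm⟩
  refine ⟨σ⁻¹, funext fun i => ?_⟩
  have hi := congrArg (fun s : Set.powersetCard ι _ => i ∈ (s : Finset ι)) hσ
  simp only [Set.powersetCard.coe_smul, ← Finset.inv_smul_mem_iff, Equiv.Perm.smul_def,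
    Finset.mem_filter, Finset.mem_univ, true_and, eq_iff_iff] at hi
  have hbit : ∀ x y : ZMod 2, (x ≠ 0 ↔ y ≠ 0) → x = y := by decide
  exact hbit _ _ hi.symm

theorem image_funCongrLeft_cap7 (σ : Equiv.Perm (Fin 6)) (w : V) :
    LinearEquiv.funCongrLeft (ZMod 2) (ZMod 2) σ '' cap7 w = cap7 (w ∘ σ) := by
  have he : ⇑(LinearEquiv.funCongrLeft (ZMod 2) (ZMod 2) σ) ∘ e = e ∘ σ.symm :=
    funext fun i => Pi.single_comp_equiv σ i 1
  rw [cap7_eq_insert_range, cap7_eq_insert_range, Set.image_insert_eq, ← Set.range_comp, he,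
    EquivLike.range_comp]
  rfl

theorem projEquiv_cap7_of_hammingNorm_eq {w w' : V} (h : hammingNorm w = hammingNorm w') :
    ProjEquiv (cap7 w) (cap7 w') := by
  obtain ⟨σ, rfl⟩ := exists_perm_comp_eq_of_hammingNorm_eq h
  exact ⟨_, image_funCongrLeft_cap7 σ w⟩

def capReps : Set V := {![1,1,1,1,1,1], ![1,0,0,0,1,1], ![1,1,0,1,1,0], ![1,1,1,0,1,1]}

set_option maxRecDepth 8000 in
theorem isCap_cap7_of_mem_capReps {w : V} (hw : w ∈ capReps) : IsCap (cap7 w) := by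
  simp only [capReps, Set.mem_insert_iff, Set.mem_singleton_iff] at hw
  rw [cap7_eq_coe, isCap_coe_iff]
  rcases hw with rfl | rfl | rfl | rfl <;> exact ⟨by decide, by decide⟩

theorem zeroSumCards_cap7_of_mem_capReps {w : V} (hw : w ∈ capReps) :
    zeroSumCards (cap7 w) = {0, hammingNorm w + 1} := by
  simp only [capReps, Set.mem_insert_iff, Set.mem_singleton_iff] at hw
  rw [cap7_eq_coe, zeroSumCards_coe_finset, ← Finset.coe_pair, Finset.coe_inj]
  rcases hw with rfl | rfl | rfl | rfl <;> decide

theorem hammingNorm_injOn_capReps : Set.InjOn hammingNorm capReps := by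
  simp only [Set.InjOn, capReps, Set.mem_insert_iff, Set.mem_singleton_iff]
  rintro a (rfl | rfl | rfl | rfl) b (rfl | rfl | rfl | rfl) <;> decide

theorem exists_mem_capReps_hammingNorm_eq {w : V} (hw : 3 ≤ hammingNorm w) :
    ∃ r ∈ capReps, hammingNorm r = hammingNorm w := by
  have : hammingNorm w ≤ 6 := hammingNorm_le_card_fintype.trans_eq (Fintype.card_fin 6)
  interval_cases hammingNorm w
  · exact ⟨![1,0,0,0,1,1], .inr (.inl rfl), by decide⟩
  · exact ⟨![1,1,0,1,1,0], .inr (.inr (.inl rfl)), by decide⟩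
  · exact ⟨![1,1,1,0,1,1], .inr (.inr (.inr rfl)), by decide⟩
  · exact ⟨![1,1,1,1,1,1], .inl rfl, by decide⟩

/-- Up to projective equivalence there are exactly 4 caps of size 7 in PG(5,2)
spanning `V`, namely the four listed ones. -/
theorem seven_caps_classification :
    (∀ w ∈ ({![1,1,1,1,1,1], ![1,0,0,0,1,1], ![1,1,0,1,1,0], ![1,1,1,0,1,1]} : Set V),
      IsCap (cap7 w) ∧ Submodule.span (ZMod 2) (cap7 w) = ⊤) ∧
    (∀ w ∈ ({![1,1,1,1,1,1], ![1,0,0,0,1,1], ![1,1,0,1,1,0], ![1,1,1,0,1,1]} : Set V),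
      ∀ w' ∈ ({![1,1,1,1,1,1], ![1,0,0,0,1,1], ![1,1,0,1,1,0], ![1,1,1,0,1,1]} : Set V),
      w ≠ w' → ¬ ProjEquiv (cap7 w) (cap7 w')) ∧
    (∀ S : Set V, IsCap S → S.ncard = 7 → Submodule.span (ZMod 2) S = ⊤ →
      ∃ w ∈ ({![1,1,1,1,1,1], ![1,0,0,0,1,1], ![1,1,0,1,1,0], ![1,1,1,0,1,1]} : Set V),
        ProjEquiv (cap7 w) S) := by
  refine ⟨fun w hw => ⟨isCap_cap7_of_mem_capReps hw, span_cap7_eq_top w⟩, ?_, ?_⟩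
  · intro w hw w' hw' hne hequiv
    have h := hequiv.zeroSumCards_eq
    rw [zeroSumCards_cap7_of_mem_capReps hw, zeroSumCards_cap7_of_mem_capReps hw',
      Set.pair_eq_pair_iff] at h
    exact hne (hammingNorm_injOn_capReps hw hw' (by simpa using h))
  · intro S hS hcard hspan
    obtain ⟨A, w, hw, hAS⟩ := exists_linearEquiv_image_eq_cap7 hS.1 hcard hspan
    obtain ⟨r, hr, hrw⟩ :=
      exists_mem_capReps_hammingNorm_eq ((hAS ▸ hS.image A).three_le_hammingNorm hw)
    exact ⟨r, hr, (projEquiv_cap7_of_hammingNorm_eq hrw).trans (ProjEquiv.symm ⟨A, hAS⟩)⟩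
end

section
/- Let S ⊂ V = (Fin 6 → ZMod 2) be the 7-cap consisting of the six standard basis vectors e1, …, e6 together with the all-ones vector (1,1,1,1,1,1). Then the stabilizer {A ∈ GL(6, GF(2)) : A '' S = S} of S has order 5040. -/
lemma CharTwo.add_self_eq_zero_of_module (R : Type*) {M : Type*} [Ring R] [CharP R 2]
    [AddCommGroup M] [Module R M] (x : M) : x + x = 0 := by
  rw [← two_smul R, CharTwo.two_eq_zero, zero_smul]

namespace Module.Basis

variable {ι R M : Type*} [Fintype ι] [CommRing R] [AddCommGroup M] [Module R M]

noncomputable def frame (b : Basis ι R M) : Option ι → M := fun j => j.elim (∑ i, b i) b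

variable (b : Basis ι R M)

@[simp] lemma frame_none : b.frame none = ∑ i, b i := rfl

@[simp] lemma frame_some (i : ι) : b.frame (some i) = b i := rfl

lemma frame_injective [Nontrivial R] (hι : 2 ≤ Fintype.card ι) : Function.Injective b.frame := by
  have sum_ne (j : ι) : ∑ i, b i ≠ b j := by
    obtain ⟨k, hk⟩ := Fintype.exists_ne_of_one_lt_card hι j
    intro h
    simpa [hk.symm] using congr_arg (fun x => b.repr x k) h
  rintro (_ | i) (_ | j) h
  · rfl
  · exact absurd h (sum_ne j)
  · exact absurd h.symm (sum_ne i)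
  · exact congr_arg some (b.injective h)

noncomputable def frameMap (σ : Equiv.Perm (Option ι)) : M →ₗ[R] M :=
  b.constr R fun i => b.frame (σ (some i))

variable [CharP R 2]

lemma sum_frame : ∑ j, b.frame j = 0 := by
  rw [Fintype.sum_option]
  exact CharTwo.add_self_eq_zero_of_module R _

/-- `frameMap σ` is only prescribed on the basis; it sends `∑ i, b i` to the right point because
the frame points sum to `0`. -/
lemma frameMap_frame (σ : Equiv.Perm (Option ι)) (j : Option ι) :
    b.frameMap σ (b.frame j) = b.frame (σ j) := by
  cases j with
  | some i => exact b.constr_basis R _ i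
  | none =>
    have hsum : b.frame (σ none) + ∑ i, b.frame (σ (some i)) = 0 := by
      rw [← Fintype.sum_option (fun j => b.frame (σ j)), Equiv.sum_comp σ b.frame, sum_frame]
    rw [← CharTwo.add_self_eq_zero_of_module R (b.frame (σ none))] at hsum
    rw [frame_none, map_sum, ← add_left_cancel hsum]
    exact Finset.sum_congr rfl fun i _ => b.constr_basis R _ i

lemma frameMap_mul (σ τ : Equiv.Perm (Option ι)) :
    b.frameMap (σ * τ) = b.frameMap σ ∘ₗ b.frameMap τ :=
  b.ext fun i => by
    simp only [LinearMap.comp_apply, ← frame_some, frameMap_frame, Equiv.Perm.mul_apply]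

lemma frameMap_one : b.frameMap 1 = LinearMap.id :=
  b.ext fun i => by
    rw [← frame_some, frameMap_frame, Equiv.Perm.one_apply, LinearMap.id_apply]

noncomputable def frameEquiv (σ : Equiv.Perm (Option ι)) : M ≃ₗ[R] M :=
  .ofLinearMap (b.frameMap σ) (b.frameMap σ⁻¹)
    (by rw [← frameMap_mul, mul_inv_cancel, frameMap_one])
    (by rw [← frameMap_mul, inv_mul_cancel, frameMap_one])

lemma frameEquiv_frame (σ : Equiv.Perm (Option ι)) (j : Option ι) :
    b.frameEquiv σ (b.frame j) = b.frame (σ j) :=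
  b.frameMap_frame σ j

lemma image_frameEquiv_range_frame (σ : Equiv.Perm (Option ι)) :
    b.frameEquiv σ '' Set.range b.frame = Set.range b.frame := by
  have hcomp : b.frameEquiv σ ∘ b.frame = b.frame ∘ σ := funext (b.frameEquiv_frame σ)
  rw [← Set.range_comp, hcomp, Set.range_comp, σ.range_eq_univ, Set.image_univ]

lemma exists_frameEquiv_eq (hf : Function.Injective b.frame) (A : M ≃ₗ[R] M)
    (hA : A '' Set.range b.frame = Set.range b.frame) : ∃ σ, b.frameEquiv σ = A := by
  let σ : Equiv.Perm (Option ι) := (Equiv.ofInjective _ hf).trans <|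
    (A.toEquiv.image _).trans <| (Equiv.setCongr hA).trans (Equiv.ofInjective _ hf).symm
  have hσ (j : Option ι) : b.frame (σ j) = A (b.frame j) := by
    simp only [σ, Equiv.trans_apply, Equiv.apply_ofInjective_symm]
    rfl
  refine ⟨σ, LinearEquiv.toLinearMap_injective <| b.ext fun i => ?_⟩
  simp only [LinearEquiv.coe_coe, ← frame_some, frameEquiv_frame, hσ]

lemma frameEquiv_injective (hf : Function.Injective b.frame) :
    Function.Injective b.frameEquiv := fun σ τ h =>
  Equiv.ext fun j => hf <| by rw [← frameEquiv_frame, h, frameEquiv_frame]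

open Nat in
theorem ncard_stabilizer_range_frame (hι : 2 ≤ Fintype.card ι) :
    {A : M ≃ₗ[R] M | A '' Set.range b.frame = Set.range b.frame}.ncard =
      (Fintype.card ι + 1)! := by
  have : Nontrivial R := CharP.nontrivial_of_char_ne_one (v := 2) (by norm_num)
  have hf := b.frame_injective hι
  have hstab : {A : M ≃ₗ[R] M | A '' Set.range b.frame = Set.range b.frame} =
      Set.range b.frameEquiv := Set.ext fun A =>
    ⟨b.exists_frameEquiv_eq hf A, by rintro ⟨σ, rfl⟩; exact b.image_frameEquiv_range_frame σ⟩
  rw [hstab, ← Nat.card_coe_set_eq, Nat.card_range_of_injective (b.frameEquiv_injective hf),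
    Nat.card_perm, Nat.card_eq_fintype_card, Fintype.card_option]

end Module.Basis

lemma range_frame_basisFun : Set.range (Pi.basisFun (ZMod 2) (Fin 6)).frame =
    ({e 0, e 1, e 2, e 3, e 4, e 5, ![1,1,1,1,1,1]} : Set V) := by
  have hb : ⇑(Pi.basisFun (ZMod 2) (Fin 6)) = e := funext fun i => Pi.basisFun_apply _ _ i
  have hsum : ∑ i, e i = ![1,1,1,1,1,1] := by
    ext k; fin_cases k <;> simp [e, Finset.sum_apply]
  ext x
  simp only [Set.mem_range, Option.exists, Module.Basis.frame_none, Module.Basis.frame_some,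
    hb, hsum, Fin.exists_fin_succ]
  simp [eq_comm]
  tauto

/-- The stabilizer in GL(6,GF(2)) of the 7-cap consisting of the six standard basis
vectors together with the all-ones vector has order 5040. -/
theorem stabilizer_frame_cap :
    Set.ncard {A : V ≃ₗ[ZMod 2] V |
      ⇑A '' ({e 0, e 1, e 2, e 3, e 4, e 5, ![1,1,1,1,1,1]} : Set V)
        = ({e 0, e 1, e 2, e 3, e 4, e 5, ![1,1,1,1,1,1]} : Set V)} = 5040 := by
  rw [← range_frame_basisFun, Module.Basis.ncard_stabilizer_range_frame _ (by simp)]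
  rfl
end

section
/- For each k ∈ {29, 30, 31}, up to projective equivalence there is exactly one cap of size k in PG(5,2): any two caps of size k are projectively equivalent, and every such cap is incomplete (it extends by some nonzero vector to a larger cap). -/
open Finset

section Walsh

variable {n : ℕ}

lemma neg_one_pow_val_add (a b : ZMod 2) :
    (-1 : ℤ) ^ (a + b).val = (-1) ^ a.val * (-1) ^ b.val := by
  fin_cases a <;> fin_cases b <;> rfl

lemma sum_neg_one_pow_dotProduct (v : Fin n → ZMod 2) :
    ∑ u : Fin n → ZMod 2, (-1 : ℤ) ^ (u ⬝ᵥ v).val = if v = 0 then 2 ^ n else 0 := by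
  split_ifs with hv
  · simp [hv, ZMod.card]
  obtain ⟨i, hi⟩ := Function.ne_iff.mp hv
  have hvi : v i = 1 := (by decide : ∀ x : ZMod 2, x ≠ 0 → x = 1) _ hi
  have hflip : ∑ u : Fin n → ZMod 2, (-1 : ℤ) ^ (u ⬝ᵥ v).val
      = ∑ u : Fin n → ZMod 2, (-1 : ℤ) ^ ((u + Pi.single i 1) ⬝ᵥ v).val :=
    (Equiv.sum_comp (Equiv.addRight (Pi.single i 1)) fun u => (-1 : ℤ) ^ (u ⬝ᵥ v).val).symm
  simp only [add_dotProduct, single_dotProduct, hvi, neg_one_pow_val_add, one_mul] at hflip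
  simp only [ZMod.val_one, pow_one, mul_neg_one, sum_neg_distrib] at hflip
  linarith

def walsh (S : Finset (Fin n → ZMod 2)) (u : Fin n → ZMod 2) : ℤ :=
  ∑ s ∈ S, (-1) ^ (u ⬝ᵥ s).val

variable (S : Finset (Fin n → ZMod 2))

lemma walsh_zero : walsh S 0 = #S := by simp [walsh]

lemma walsh_eq_card_sub (u : Fin n → ZMod 2) : walsh S u = #S - 2 * #{s ∈ S | u ⬝ᵥ s = 1} := by
  have h : ∀ x : ZMod 2, (-1 : ℤ) ^ x.val = 1 - 2 * if x = 1 then 1 else 0 := by decide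
  simp only [walsh, h, sum_sub_distrib, ← mul_sum, sum_boole, sum_const, nsmul_eq_mul, mul_one]

lemma sum_walsh_sq : ∑ u, walsh S u ^ 2 = 2 ^ n * #S := by
  calc ∑ u, walsh S u ^ 2
      = ∑ a ∈ S, ∑ b ∈ S, ∑ u : Fin n → ZMod 2, (-1 : ℤ) ^ (u ⬝ᵥ (a + b)).val := by
        simp only [walsh, sq, sum_mul_sum, dotProduct_add, neg_one_pow_val_add]
        rw [sum_comm]
        exact sum_congr rfl fun _ _ => sum_comm
    _ = ∑ a ∈ S, ∑ b ∈ S, if a = b then 2 ^ n else 0 := by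
        simp only [sum_neg_one_pow_dotProduct, add_eq_zero_iff_eq_neg, ZModModule.neg_eq_self]
    _ = 2 ^ n * #S := by simp [sum_ite_eq, mul_comm]

variable {S}

lemma sum_walsh_pow_three (hS : ∀ a ∈ S, ∀ b ∈ S, ∀ c ∈ S, a + b + c ≠ 0) :
    ∑ u, walsh S u ^ 3 = 0 := by
  calc ∑ u, walsh S u ^ 3
      = ∑ a ∈ S, ∑ b ∈ S, ∑ c ∈ S, ∑ u : Fin n → ZMod 2, (-1 : ℤ) ^ (u ⬝ᵥ (a + b + c)).val := by
        have h : ∀ u, walsh S u ^ 3 =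
            ∑ a ∈ S, ∑ b ∈ S, ∑ c ∈ S, (-1 : ℤ) ^ (u ⬝ᵥ (a + b + c)).val := fun u => by
          simp only [walsh, pow_three, sum_mul, mul_sum, dotProduct_add, neg_one_pow_val_add]
          exact sum_congr rfl fun _ _ => sum_congr rfl fun _ _ => sum_congr rfl fun _ _ => by ring
        rw [sum_congr rfl fun u _ => h u, sum_comm]
        refine sum_congr rfl fun _ _ => ?_
        rw [sum_comm]
        exact sum_congr rfl fun _ _ => sum_comm
    _ = 0 := sum_eq_zero fun a ha => sum_eq_zero fun b hb => sum_eq_zero fun c hc => by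
        rw [sum_neg_one_pow_dotProduct, if_neg (hS a ha b hb c hc)]

lemma exists_four_mul_card_filter_gt (hS : ∀ a ∈ S, ∀ b ∈ S, ∀ c ∈ S, a + b + c ≠ 0)
    (hk : 2 ^ n < 3 * #S) : ∃ u ≠ 0, 2 ^ n < 4 * #{s ∈ S | u ⬝ᵥ s = 1} := by
  -- `∑ Ŝ² (2Ŝ + 2ⁿ - 2k) = 2ⁿ k (2ⁿ - 2k)`, of which the term `u = 0` alone is `2ⁿ k²`;
  -- if all other terms were nonnegative this would give `3k ≤ 2ⁿ`.
  by_contra! h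
  set k : ℤ := (#S : ℤ) with hk_def
  set F : (Fin n → ZMod 2) → ℤ := fun u => walsh S u ^ 2 * (2 * walsh S u + 2 ^ n - 2 * k)
  have hsum : ∑ u, F u = (2 ^ n - 2 * k) * (2 ^ n * k) := by
    simp only [F, fun u => show walsh S u ^ 2 * (2 * walsh S u + 2 ^ n - 2 * k)
      = 2 * walsh S u ^ 3 + (2 ^ n - 2 * k) * walsh S u ^ 2 by ring]
    rw [sum_add_distrib, ← mul_sum, ← mul_sum, sum_walsh_pow_three hS, sum_walsh_sq]
    ring
  have hrest : 0 ≤ ∑ u ∈ univ.erase 0, F u := sum_nonneg fun u hu => by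
    have h4 := h u (ne_of_mem_erase hu)
    have : (2 : ℤ) * walsh S u + 2 ^ n - 2 * k ≥ 0 := by
      rw [walsh_eq_card_sub]; linarith
    positivity
  have hF0 : F 0 = k ^ 2 * 2 ^ n := by simp only [F, walsh_zero]; ring
  have hk' : (2 : ℤ) ^ n < 3 * k := by rw [hk_def]; exact_mod_cast hk
  have hpos : (0 : ℤ) < 2 ^ n := by positivity
  have hsplit := add_sum_erase univ F (mem_univ 0)
  rw [hF0, hsum] at hsplit
  have hneg : 0 < 2 ^ n * k * (3 * k - 2 ^ n) :=
    mul_pos (mul_pos hpos (by linarith)) (by linarith)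
  nlinarith

lemma two_mul_card_filter_dotProduct_eq_one {u : Fin n → ZMod 2} (hu : u ≠ 0) :
    2 * #{v : Fin n → ZMod 2 | u ⬝ᵥ v = 1} = 2 ^ n := by
  have h := walsh_eq_card_sub univ u
  rw [walsh, sum_congr rfl fun v _ => by rw [dotProduct_comm], sum_neg_one_pow_dotProduct,
    if_neg hu, card_univ, Fintype.card_fun, ZMod.card, Fintype.card_fin] at h
  push_cast at h
  exact_mod_cast (by linarith : (2 : ℤ) * #{v : Fin n → ZMod 2 | u ⬝ᵥ v = 1} = 2 ^ n)

lemma two_mul_card_filter_le (hS : ∀ a ∈ S, ∀ b ∈ S, ∀ c ∈ S, a + b + c ≠ 0)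
    {u b : Fin n → ZMod 2} (hb : b ∈ S) (hub : u ⬝ᵥ b = 0) :
    2 * #{s ∈ S | u ⬝ᵥ s = 1} ≤ #{v : Fin n → ZMod 2 | u ⬝ᵥ v = 1} := by
  set A := S.filter (u ⬝ᵥ · = 1)
  have hdisj : Disjoint A (A.map (addRightEmbedding b)) := by
    refine disjoint_left.2 fun x hxA hx => ?_
    obtain ⟨a, haA, rfl⟩ := mem_map.1 hx
    exact hS a (mem_filter.1 haA).1 b hb _ (mem_filter.1 hxA).1 (ZModModule.add_self _)
  have hsub : A ∪ A.map (addRightEmbedding b) ⊆ univ.filter (u ⬝ᵥ · = 1) := by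
    refine union_subset (fun x hx => by simpa using (mem_filter.1 hx).2) fun x hx => ?_
    obtain ⟨a, haA, rfl⟩ := mem_map.1 hx
    simp [dotProduct_add, (mem_filter.1 haA).2, hub]
  calc 2 * #A = #(A ∪ A.map (addRightEmbedding b)) := by
        rw [card_union_of_disjoint hdisj, card_map, two_mul]
    _ ≤ _ := card_le_card hsub

theorem exists_forall_dotProduct_eq_one (hS : ∀ a ∈ S, ∀ b ∈ S, ∀ c ∈ S, a + b + c ≠ 0)
    (hk : 2 ^ n < 3 * #S) : ∃ u : Fin n → ZMod 2, u ≠ 0 ∧ ∀ s ∈ S, u ⬝ᵥ s = 1 := by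
  obtain ⟨u, hu, hlarge⟩ := exists_four_mul_card_filter_gt hS hk
  refine ⟨u, hu, fun b hb => ?_⟩
  by_contra hub
  have hsmall := two_mul_card_filter_le hS hb ((by decide : ∀ x : ZMod 2, x ≠ 1 → x = 0) _ hub)
  have hcount := two_mul_card_filter_dotProduct_eq_one hu
  omega

end Walsh

section Frame

variable {K W : Type*} [Field K] [AddCommGroup W] [Module K W]

lemma span_setOf_eq_one_eq_top {f : W →ₗ[K] K} (hf : f ≠ 0) :
    Submodule.span K {x | f x = 1} = ⊤ := by
  obtain ⟨y, hy⟩ : ∃ y, f y ≠ 0 := by simpa [LinearMap.ext_iff] using hf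
  have hx₀ : f ((f y)⁻¹ • y) = 1 := by simp [hy]
  refine Submodule.eq_top_iff'.2 fun x => ?_
  have h₁ : x + (1 - f x) • (f y)⁻¹ • y ∈ Submodule.span K {x | f x = 1} :=
    Submodule.subset_span (by simp [hx₀])
  have h₂ := Submodule.smul_mem _ (1 - f x) (Submodule.subset_span hx₀ :
    (f y)⁻¹ • y ∈ Submodule.span K {x | f x = 1})
  simpa using Submodule.sub_mem _ h₁ h₂

lemma LinearIndependent.exists_basis_sum_mem {ι : Type*} {v : ι → W} (hv : LinearIndependent K v)
    {C : Set W} (hC : Submodule.span K C = ⊤) (hvC : ∀ i, v i ∈ C) :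
    ∃ (J : Set W) (b : Module.Basis (ι ⊕ J) K W),
      (∀ i, b (.inl i) = v i) ∧ ∀ j, b (.inr j) ∈ C := by
  classical
  have hrange : Set.range v ⊆ C := Set.range_subset_iff.2 hvC
  let τ : ι ⊕ ↥(hv.linearIndepOn_id.extend hrange \ Set.range v) ≃
      hv.linearIndepOn_id.extend hrange :=
    (Equiv.sumCongr (Equiv.ofInjective v hv.injective) (Equiv.refl _)).trans
      (Equiv.Set.sumDiffSubset (hv.linearIndepOn_id.subset_extend hrange))
  refine ⟨_, (Module.Basis.extendLe hv.linearIndepOn_id hrange hC.ge).reindex τ.symm,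
    fun i => ?_, fun j => ?_⟩
  · simp [τ, Equiv.Set.sumDiffSubset_apply_inl]
  · simpa [τ] using hv.linearIndepOn_id.extend_subset hrange j.2.1

theorem exists_linearEquiv_apply_eq [FiniteDimensional K W] {ι : Type*}
    {f g : W →ₗ[K] K} (hf : f ≠ 0) (hg : g ≠ 0) {v w : ι → W}
    (hv : LinearIndependent K v) (hw : LinearIndependent K w)
    (hfv : ∀ i, f (v i) = 1) (hgw : ∀ i, g (w i) = 1) :
    ∃ A : W ≃ₗ[K] W, (∀ i, A (v i) = w i) ∧ ∀ x, g (A x) = f x := by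
  obtain ⟨J, b, hbv, hbJ⟩ := hv.exists_basis_sum_mem (span_setOf_eq_one_eq_top hf) hfv
  obtain ⟨J', b', hbw, hbJ'⟩ := hw.exists_basis_sum_mem (span_setOf_eq_one_eq_top hg) hgw
  have := Module.Finite.finite_basis b
  have := Module.Finite.finite_basis b'
  have : Finite ι := Finite.of_injective _ (Sum.inl_injective (β := J))
  have : Finite J := Finite.of_injective _ (Sum.inr_injective (α := ι))
  have : Finite J' := Finite.of_injective _ (Sum.inr_injective (α := ι))
  obtain ⟨σ⟩ : Nonempty (J ≃ J') := by
    refine Finite.card_eq.1 ?_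
    have h := (Module.finrank_eq_nat_card_basis b).symm.trans (Module.finrank_eq_nat_card_basis b')
    rw [Nat.card_sum, Nat.card_sum] at h
    omega
  set A := b.equiv b' (Equiv.sumCongr (Equiv.refl ι) σ)
  have hA : ∀ i, A (v i) = w i := fun i => by
    rw [← hbv, ← hbw, Module.Basis.equiv_apply]; rfl
  refine ⟨A, hA, fun x => LinearMap.congr_fun (b.ext fun k => ?_ : g ∘ₗ A.toLinearMap = f) x⟩
  rcases k with i | j
  · simp [hbv, hA, hfv, hgw]
  · simp only [LinearMap.coe_comp, LinearEquiv.coe_coe, Function.comp_apply, A,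
      Module.Basis.equiv_apply]
    exact (hbJ' _).trans (hbJ j).symm

theorem exists_linearEquiv_image_eq [FiniteDimensional K W] {f g : W →ₗ[K] K} (hf : f ≠ 0)
    (hg : g ≠ 0) {P Q : Set W} (hP : LinearIndepOn K id P) (hQ : LinearIndepOn K id Q)
    (hPf : ∀ x ∈ P, f x = 1) (hQg : ∀ y ∈ Q, g y = 1) (hPQ : P.ncard = Q.ncard) :
    ∃ A : W ≃ₗ[K] W, A '' P = Q ∧ ∀ x, g (A x) = f x := by
  have := LinearIndependent.finite hP
  have := LinearIndependent.finite hQ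
  obtain ⟨φ⟩ : Nonempty (P ≃ Q) := Finite.card_eq.1 (by simpa [Set.ncard_def] using hPQ)
  obtain ⟨A, hA, hAf⟩ := exists_linearEquiv_apply_eq hf hg (v := ((↑) : P → W))
    (w := fun x => (φ x : W)) hP (hQ.comp φ φ.injective) (fun x => hPf x x.2)
    (fun x => hQg _ (φ x).2)
  refine ⟨A, Set.ext fun y => ⟨?_, fun hy => ?_⟩, hAf⟩
  · rintro ⟨x, hx, rfl⟩
    exact (hA ⟨x, hx⟩).symm ▸ (φ _).2
  · exact ⟨φ.symm ⟨y, hy⟩, (φ.symm _).2, by rw [hA, Equiv.apply_symm_apply]⟩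

end Frame

lemma linearIndepOn_of_ncard_le_three {W : Type*} [AddCommGroup W] [Module (ZMod 2) W]
    (f : W →ₗ[ZMod 2] ZMod 2) {P : Set W} (hP : P.Finite) (hPf : ∀ x ∈ P, f x = 1)
    (h3 : P.ncard ≤ 3) : LinearIndepOn (ZMod 2) id P := by
  classical
  lift P to Finset W using hP
  rw [Set.ncard_coe_finset] at h3
  refine linearIndepOn_finset_iff.2 fun c hc => ?_
  set t := P.filter (c · = 1)
  have hsum : ∑ x ∈ t, x = 0 := by
    rw [← hc, sum_filter]
    refine sum_congr rfl fun x _ => ?_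
    rcases (by decide : ∀ a : ZMod 2, a = 0 ∨ a = 1) (c x) with h | h <;> simp [h]
  -- a vanishing sum of points with `f = 1` has an even number of terms
  have ht : t = ∅ := by
    have hpar : ((#t : ℕ) : ZMod 2) = 0 := by
      rw [← map_zero f, ← hsum, map_sum, sum_congr rfl fun x hx => hPf x (mem_filter.1 hx).1]
      simp [t]
    have ht3 : #t ≤ 3 := (card_filter_le _ _).trans h3
    rw [ZMod.natCast_eq_zero_iff_even] at hpar
    obtain h0 | h2 : #t = 0 ∨ #t = 2 := by obtain ⟨r, hr⟩ := hpar; omega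
    · exact card_eq_zero.1 h0
    · obtain ⟨x, y, hxy, hxy'⟩ := card_eq_two.1 h2
      rw [hxy', sum_pair hxy, add_eq_zero_iff_eq_neg, ZModModule.neg_eq_self] at hsum
      exact absurd hsum hxy
  intro x hx
  have : x ∉ t := ht ▸ notMem_empty x
  exact (by decide : ∀ a : ZMod 2, ¬a = 1 → a = 0) _ fun h => this (mem_filter.2 ⟨hx, h⟩)

lemma IsCap.add_add_ne_zero {S : Set V} (hS : IsCap S) {a b c : V} (ha : a ∈ S) (hb : b ∈ S)
    (hc : c ∈ S) : a + b + c ≠ 0 := by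
  obtain ⟨-, hS0, hS3⟩ := hS
  by_cases hab : a = b
  · subst hab; rw [ZModModule.add_self, zero_add]; exact hS0 c hc
  by_cases hac : a = c
  · subst hac; rw [add_right_comm, ZModModule.add_self, zero_add]; exact hS0 b hb
  by_cases hbc : b = c
  · subst hbc; rw [add_assoc, ZModModule.add_self, add_zero]; exact hS0 a ha
  exact hS3 a ha b hb c hc hab hac hbc

lemma IsCap.exists_subset_setOf_dotProduct_eq_one {S : Set V} (hS : IsCap S)
    (hk : 22 ≤ S.ncard) : ∃ u : V, u ≠ 0 ∧ S ⊆ {v | u ⬝ᵥ v = 1} := by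
  obtain ⟨u, hu, hSu⟩ := exists_forall_dotProduct_eq_one (S := hS.1.toFinset)
    (fun a ha b hb c hc => hS.add_add_ne_zero (by simpa using ha) (by simpa using hb)
      (by simpa using hc))
    (by rw [← Set.ncard_eq_toFinset_card S hS.1]; omega)
  exact ⟨u, hu, fun s hs => hSu s (by simpa using hs)⟩

lemma ncard_setOf_dotProduct_eq_one {u : V} (hu : u ≠ 0) : {v : V | u ⬝ᵥ v = 1}.ncard = 32 := by
  have h := two_mul_card_filter_dotProduct_eq_one hu
  have hset : {v : V | u ⬝ᵥ v = 1} = ↑(univ.filter fun v : V => u ⬝ᵥ v = 1) := by ext; simp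
  rw [hset, Set.ncard_coe_finset]
  linarith

lemma isCap_of_subset_setOf_dotProduct_eq_one {S : Set V} {u : V}
    (h : S ⊆ {v | u ⬝ᵥ v = 1}) : IsCap S := by
  refine ⟨S.toFinite, fun v hv h0 => by simpa [h0] using h hv,
    fun a ha b hb c hc _ _ _ h0 => ?_⟩
  have h1 := congrArg (u ⬝ᵥ ·) h0
  simp only [dotProduct_add, dotProduct_zero, show u ⬝ᵥ a = 1 from h ha,
    show u ⬝ᵥ b = 1 from h hb, show u ⬝ᵥ c = 1 from h hc] at h1
  exact absurd h1 (by decide)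

lemma exists_isCap_ncard_eq {k : ℕ} (hk : k ≤ 32) : ∃ S : Set V, IsCap S ∧ S.ncard = k := by
  obtain ⟨S, hS, hSk⟩ := Set.exists_subset_card_eq
    (hk.trans (ncard_setOf_dotProduct_eq_one (u := e 0) (by simp [e])).ge)
  exact ⟨S, isCap_of_subset_setOf_dotProduct_eq_one hS, hSk⟩

lemma IsCap.exists_insert_isCap {S : Set V} (hS : IsCap S) (h22 : 22 ≤ S.ncard)
    (h32 : S.ncard < 32) : ∃ v : V, v ≠ 0 ∧ v ∉ S ∧ IsCap (insert v S) := by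
  obtain ⟨u, hu, hSu⟩ := hS.exists_subset_setOf_dotProduct_eq_one h22
  obtain ⟨v, hvu, hvS⟩ := Set.exists_mem_notMem_of_ncard_lt_ncard
    (h32.trans_eq (ncard_setOf_dotProduct_eq_one hu).symm)
  exact ⟨v, fun h0 => by simp [h0] at hvu, hvS,
    isCap_of_subset_setOf_dotProduct_eq_one (Set.insert_subset hvu hSu)⟩

theorem IsCap.projEquiv_of_ncard_eq {S T : Set V} (hS : IsCap S) (hT : IsCap T)
    (hST : S.ncard = T.ncard) (h29 : 29 ≤ S.ncard) : ProjEquiv S T := by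
  obtain ⟨u, hu, hSu⟩ := hS.exists_subset_setOf_dotProduct_eq_one (by omega)
  obtain ⟨u', hu', hTu'⟩ := hT.exists_subset_setOf_dotProduct_eq_one (by omega)
  have hP : ({v : V | u ⬝ᵥ v = 1} \ S).ncard = 32 - S.ncard := by
    rw [Set.ncard_sdiff hSu, ncard_setOf_dotProduct_eq_one hu]
  have hQ : ({v : V | u' ⬝ᵥ v = 1} \ T).ncard = 32 - T.ncard := by
    rw [Set.ncard_sdiff hTu', ncard_setOf_dotProduct_eq_one hu']
  let f : Module.Dual (ZMod 2) V := dotProductEquiv (ZMod 2) (Fin 6) u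
  let g : Module.Dual (ZMod 2) V := dotProductEquiv (ZMod 2) (Fin 6) u'
  obtain ⟨A, hAPQ, hA⟩ := exists_linearEquiv_image_eq (f := f) (g := g)
    (P := {v | u ⬝ᵥ v = 1} \ S) (Q := {v | u' ⬝ᵥ v = 1} \ T)
    ((LinearEquiv.map_ne_zero_iff _).2 hu) ((LinearEquiv.map_ne_zero_iff _).2 hu')
    (linearIndepOn_of_ncard_le_three f (Set.toFinite _) (fun x hx => hx.1) (by omega))
    (linearIndepOn_of_ncard_le_three g (Set.toFinite _) (fun x hx => hx.1) (by omega))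
    (fun x hx => hx.1) (fun y hy => hy.1) (by omega)
  have hC : A '' {v | u ⬝ᵥ v = 1} = {v | u' ⬝ᵥ v = 1} := by
    ext y
    have h := hA (A.symm y)
    simp only [f, g, dotProductEquiv_apply_apply, LinearEquiv.apply_symm_apply] at h
    simp [A.image_eq_preimage_symm, ← h]
  refine ⟨A, ?_⟩
  rw [← Set.sdiff_sdiff_cancel_left hSu, Set.image_sdiff A.injective, hC, hAPQ,
    Set.sdiff_sdiff_cancel_left hTu']

/-- For each k ∈ {29, 30, 31} there is, up to projective equivalence, exactly one cap
of size k in PG(5,2), and it is incomplete. -/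
theorem caps_29_30_31_unique_incomplete :
    ∀ k ∈ ({29, 30, 31} : Set ℕ),
      (∃ S : Set V, IsCap S ∧ S.ncard = k) ∧
      (∀ S T : Set V, IsCap S → S.ncard = k → IsCap T → T.ncard = k → ProjEquiv S T) ∧
      (∀ S : Set V, IsCap S → S.ncard = k →
        ∃ v : V, v ≠ 0 ∧ v ∉ S ∧ IsCap (insert v S)) := by
  intro k hk
  have hk' : 29 ≤ k ∧ k ≤ 31 := by
    simp only [Set.mem_insert_iff, Set.mem_singleton_iff] at hk
    omega
  exact ⟨exists_isCap_ncard_eq (by omega),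
    fun S T hS hSk hT hTk => hS.projEquiv_of_ncard_eq hT (hSk.trans hTk.symm) (by omega),
    fun S hS hSk => hS.exists_insert_isCap (by omega) (by omega)⟩
end
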